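/- arXiv:1903.09069 — 4 statements merged into one kernel-verified Lean document; each statement's English description precedes it below -/
import Mathlib

section
/- Let A, R, Q, P, L, A_c be as in the Riccati/Lyapunov setup (P symmetric solving PA + AᵀP − PRP + Q = 0 with A_c = A − RP, L symmetric solving L A_cᵀ + A_c L = R, R ⪰ 0, Q ⪰ 0). If (Q, A) is detectable (i.e., for every eigenvector v of A with eigenvalue of nonnegative real part, Qv ≠ 0), then the matrix V := PL + I is nonsingular. -/
/-!
Suppose `(PL + 1) x = 0` and put `w = L x`, so that `P w = -x`. Testing the closed-loop Riccati
equation `P A_c + A_cᴴ P + P R P + Q = 0` against `w` and the Lyapunov equation against `x` gives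
`wᴴ Q w = 0`, hence `Q w = 0`; it follows that the kernel of `PL + 1` is invariant under `A_cᴴ`, so
it contains an eigenvector `A_cᴴ x = μ x`. Then `A w = -μ w`, and since `xᴴ L x = -wᴴ P w < 0`
while `2 Re (xᴴ A_c w) = xᴴ R x ≥ 0`, we get `Re μ ≤ 0`: the vector `w` contradicts detectability.
Real matrices are handled by complexification.
-/

open Matrix Complex

open scoped ComplexOrder

theorem Module.End.exists_hasEigenvector_mem {K V : Type*} [Field K] [IsAlgClosed K]
    [AddCommGroup V] [Module K V] [FiniteDimensional K V] (f : Module.End K V)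
    {p : Submodule K V} (hp : p ≠ ⊥) (hf : ∀ x ∈ p, f x ∈ p) :
    ∃ μ, ∃ x ∈ p, f.HasEigenvector μ x := by
  have : Nontrivial p := Submodule.nontrivial_iff_ne_bot.mpr hp
  obtain ⟨μ, hμ⟩ := Module.End.exists_eigenvalue (f.restrict hf)
  obtain ⟨y, hy⟩ := hμ.exists_hasEigenvector
  refine ⟨μ, y, y.2, ?_, ?_⟩
  · simpa [LinearMap.restrict_apply] using congrArg Subtype.val hy.apply_eq_smul
  · exact_mod_cast hy.2

namespace Matrix

section Ring

variable {ι α : Type*} [Fintype ι]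

lemma star_conjTranspose_mulVec_dotProduct [NonUnitalSemiring α] [StarRing α]
    (M : Matrix ι ι α) (u v : ι → α) : star (Mᴴ *ᵥ u) ⬝ᵥ v = star u ⬝ᵥ (M *ᵥ v) := by
  rw [star_mulVec, conjTranspose_conjTranspose, dotProduct_mulVec]

variable [CommRing α] {A R Q P L Ac : Matrix ι ι α} {x : ι → α} {μ : α}

lemma mul_add_one_mulVec_eq_zero_iff [DecidableEq ι] :
    (P * L + 1) *ᵥ x = 0 ↔ P *ᵥ (L *ᵥ x) = -x := by
  rw [add_mulVec, one_mulVec, mulVec_mulVec, add_eq_zero_iff_eq_neg]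

variable [StarRing α]

lemma riccati_closedLoop (hP : P.IsHermitian) (hR : R.IsHermitian)
    (hRic : P * A + Aᴴ * P - P * R * P + Q = 0) :
    P * (A - R * P) + (A - R * P)ᴴ * P + P * R * P + Q = 0 := by
  rw [← hRic, conjTranspose_sub, conjTranspose_mul, hP.eq, hR.eq]
  noncomm_ring

lemma mulVec_mulVec_conjTranspose_mulVec_eq_neg (hRic : P * Ac + Acᴴ * P + P * R * P + Q = 0)
    (hLyap : L * Acᴴ + Ac * L = R) (hx : P *ᵥ (L *ᵥ x) = -x) (hQx : Q *ᵥ (L *ᵥ x) = 0) :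
    P *ᵥ (L *ᵥ (Acᴴ *ᵥ x)) = -(Acᴴ *ᵥ x) := by
  have hRicx := congrArg (· *ᵥ (L *ᵥ x)) hRic
  have hLyapx := congrArg (fun M ↦ P *ᵥ (M *ᵥ x)) hLyap
  simp only [add_mulVec, mulVec_add, ← mulVec_mulVec, hx, hQx, mulVec_neg, zero_mulVec]
    at hRicx hLyapx
  linear_combination (norm := module) hLyapx - hRicx

lemma mulVec_mulVec_eq_sub_smul_of_lyapunov (hLyap : L * Acᴴ + Ac * L = R)
    (hμ : Acᴴ *ᵥ x = μ • x) :
    Ac *ᵥ (L *ᵥ x) = R *ᵥ x - μ • (L *ᵥ x) := by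
  rw [← hLyap, add_mulVec, ← mulVec_mulVec, ← mulVec_mulVec, hμ, mulVec_smul]
  abel

lemma mulVec_eq_neg_smul_of_lyapunov (hLyap : L * (A - R * P)ᴴ + (A - R * P) * L = R)
    (hx : P *ᵥ (L *ᵥ x) = -x) (hμ : (A - R * P)ᴴ *ᵥ x = μ • x) :
    A *ᵥ (L *ᵥ x) = -μ • (L *ᵥ x) := by
  have h := mulVec_mulVec_eq_sub_smul_of_lyapunov hLyap hμ
  rw [sub_mulVec, ← mulVec_mulVec, hx, mulVec_neg] at h
  linear_combination (norm := module) h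

end Ring

section RCLike

variable {ι 𝕜 : Type*} [Fintype ι] [RCLike 𝕜] {R Q P L Ac : Matrix ι ι 𝕜} {x : ι → 𝕜} {μ : 𝕜}

lemma two_mul_re_dotProduct_of_lyapunov (hL : L.IsHermitian) (hLyap : L * Acᴴ + Ac * L = R)
    (x : ι → 𝕜) :
    2 * RCLike.re (star x ⬝ᵥ (Ac *ᵥ (L *ᵥ x))) = RCLike.re (star x ⬝ᵥ (R *ᵥ x)) := by
  have h : star x ⬝ᵥ (L *ᵥ (Acᴴ *ᵥ x)) = star (star x ⬝ᵥ (Ac *ᵥ (L *ᵥ x))) := by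
    rw [← star_conjTranspose_mulVec_dotProduct, hL.eq, star_dotProduct,
      star_conjTranspose_mulVec_dotProduct]
  rw [← hLyap, add_mulVec, dotProduct_add, ← mulVec_mulVec, ← mulVec_mulVec, h, map_add,
    RCLike.star_def, RCLike.conj_re]
  ring

lemma mulVec_eq_zero_of_riccati (hQ : Q.PosSemidef) (hP : P.IsHermitian) (hL : L.IsHermitian)
    (hRic : P * Ac + Acᴴ * P + P * R * P + Q = 0) (hLyap : L * Acᴴ + Ac * L = R)
    (hx : P *ᵥ (L *ᵥ x) = -x) : Q *ᵥ (L *ᵥ x) = 0 := by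
  set w := L *ᵥ x
  have hw := congrArg (fun M ↦ star w ⬝ᵥ (M *ᵥ w)) hRic
  simp only [add_mulVec, dotProduct_add, ← mulVec_mulVec, zero_mulVec, dotProduct_zero] at hw
  have hPAc : star w ⬝ᵥ (P *ᵥ (Ac *ᵥ w)) = -(star x ⬝ᵥ (Ac *ᵥ w)) := by
    rw [← star_conjTranspose_mulVec_dotProduct, hP.eq, hx, star_neg, neg_dotProduct]
  have hAcP : star w ⬝ᵥ (Acᴴ *ᵥ (P *ᵥ w)) = -star (star x ⬝ᵥ (Ac *ᵥ w)) := by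
    rw [hx, mulVec_neg, dotProduct_neg, star_dotProduct, star_conjTranspose_mulVec_dotProduct]
  have hPRP : star w ⬝ᵥ (P *ᵥ (R *ᵥ (P *ᵥ w))) = star x ⬝ᵥ (R *ᵥ x) := by
    rw [← star_conjTranspose_mulVec_dotProduct, hP.eq, hx, mulVec_neg, star_neg, neg_dotProduct,
      dotProduct_neg, neg_neg]
  rw [hPAc, hAcP, hPRP] at hw
  have hre := congrArg RCLike.re hw
  simp only [map_add, map_neg, RCLike.star_def, RCLike.conj_re, map_zero] at hre
  have hq : RCLike.re (star w ⬝ᵥ (Q *ᵥ w)) = 0 := by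
    linarith [two_mul_re_dotProduct_of_lyapunov hL hLyap x]
  have hq0 := RCLike.nonneg_iff.mp (hQ.dotProduct_mulVec_nonneg w)
  rw [← hQ.dotProduct_mulVec_zero_iff]
  exact RCLike.ext (by simpa using hq) (by simpa using hq0.2)

lemma re_nonpos_of_lyapunov (hP : P.PosSemidef) (hR : R.PosSemidef) (hL : L.IsHermitian)
    (hLyap : L * Acᴴ + Ac * L = R) (hx : P *ᵥ (L *ᵥ x) = -x) (hx0 : x ≠ 0)
    (hμ : Acᴴ *ᵥ x = μ • x) : RCLike.re μ ≤ 0 := by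
  set w := L *ᵥ x
  have hpos : 0 < star w ⬝ᵥ (P *ᵥ w) := by
    refine (hP.dotProduct_mulVec_nonneg w).lt_of_ne' fun h ↦ hx0 ?_
    rw [hP.dotProduct_mulVec_zero_iff, hx, neg_eq_zero] at h
    exact h
  obtain ⟨t, ht, hpt⟩ := RCLike.pos_iff_exists_ofReal.mp hpos
  have hxw : star x ⬝ᵥ w = -(t : 𝕜) := by
    rw [hpt, ← star_conjTranspose_mulVec_dotProduct P, hP.isHermitian.eq, hx, star_neg,
      neg_dotProduct, neg_neg]
  have key := two_mul_re_dotProduct_of_lyapunov hL hLyap x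
  rw [mulVec_mulVec_eq_sub_smul_of_lyapunov hLyap hμ, dotProduct_sub, dotProduct_smul, hxw,
    smul_eq_mul, map_sub, mul_neg, map_neg, RCLike.re_mul_ofReal] at key
  nlinarith [hR.re_dotProduct_nonneg x]

end RCLike

lemma ofRealHom_mapMatrix_transpose {ι : Type*} [Fintype ι] [DecidableEq ι]
    (M : Matrix ι ι ℝ) : ofRealHom.mapMatrix Mᵀ = (ofRealHom.mapMatrix M)ᴴ := by
  rw [← conjTranspose_eq_transpose_of_trivial]
  exact conjTranspose_map _ fun _ ↦ (conj_ofReal _).symm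

lemma PosSemidef.ofRealHom_mapMatrix {ι : Type*} [Fintype ι] [DecidableEq ι]
    {M : Matrix ι ι ℝ} (hM : M.PosSemidef) : (ofRealHom.mapMatrix M).PosSemidef := by
  open scoped MatrixOrder in
  obtain ⟨B, rfl⟩ := CStarAlgebra.nonneg_iff_eq_star_mul_self.mp hM.nonneg
  rw [map_mul, star_eq_conjTranspose, conjTranspose_eq_transpose_of_trivial,
    ofRealHom_mapMatrix_transpose]
  exact posSemidef_conjTranspose_mul_self _

theorem isUnit_mul_add_one_of_detectable {ι : Type*} [Fintype ι] [DecidableEq ι]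
    {A R Q P L : Matrix ι ι ℂ} (hR : R.PosSemidef) (hQ : Q.PosSemidef) (hP : P.PosSemidef)
    (hL : L.IsHermitian) (hRic : P * A + Aᴴ * P - P * R * P + Q = 0)
    (hLyap : L * (A - R * P)ᴴ + (A - R * P) * L = R)
    (hdet : ∀ (μ : ℂ) (w : ι → ℂ), w ≠ 0 → 0 ≤ μ.re → A *ᵥ w = μ • w → Q *ᵥ w ≠ 0) :
    IsUnit (P * L + 1) := by
  by_contra hV
  have hClosed := riccati_closedLoop hP.isHermitian hR.isHermitian hRic
  have hker : LinearMap.ker (P * L + 1).mulVecLin ≠ ⊥ := by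
    rw [isUnit_iff_isUnit_det, isUnit_iff_ne_zero, not_not, ← exists_mulVec_eq_zero_iff] at hV
    obtain ⟨v, hv0, hv⟩ := hV
    exact (Submodule.ne_bot_iff _).mpr ⟨v, hv, hv0⟩
  obtain ⟨μ, x, hxK, hx⟩ := Module.End.exists_hasEigenvector_mem (A - R * P)ᴴ.mulVecLin hker
    fun y hy ↦ by
      rw [LinearMap.mem_ker, mulVecLin_apply, mul_add_one_mulVec_eq_zero_iff] at hy ⊢
      exact mulVec_mulVec_conjTranspose_mulVec_eq_neg hClosed hLyap hy
        (mulVec_eq_zero_of_riccati hQ hP.isHermitian hL hClosed hLyap hy)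
  rw [LinearMap.mem_ker, mulVecLin_apply, mul_add_one_mulVec_eq_zero_iff] at hxK
  have hμ : (A - R * P)ᴴ *ᵥ x = μ • x := hx.apply_eq_smul
  have hw0 : L *ᵥ x ≠ 0 := fun h ↦ hx.2 (by rw [← neg_eq_zero, ← hxK, h, mulVec_zero])
  refine hdet (-μ) (L *ᵥ x) hw0 ?_ (mulVec_eq_neg_smul_of_lyapunov hLyap hxK hμ)
    (mulVec_eq_zero_of_riccati hQ hP.isHermitian hL hClosed hLyap hxK)
  simpa using re_nonpos_of_lyapunov hP hR hL hLyap hxK hx.2 hμ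

end Matrix

/-- If `(Q, A)` is detectable, then `V = PL + I` is nonsingular, where `P` solves the
Riccati equation and `L` solves the Lyapunov equation. -/
theorem stmt_3 {n : ℕ} (A R Q P L Ac : Matrix (Fin n) (Fin n) ℝ)
    (hR : R.PosSemidef) (hQ : Q.PosSemidef) (hPsd : P.PosSemidef) (hLsymm : L.IsSymm)
    (hRic : P * A + Aᵀ * P - P * R * P + Q = 0)
    (hAc : Ac = A - R * P)
    (hLyap : L * Acᵀ + Ac * L = R)
    (hdet : ∀ (lam : ℂ) (w : Fin n → ℂ), w ≠ 0 → 0 ≤ lam.re →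
      (A.map (Complex.ofReal)).mulVec w = lam • w →
      (Q.map (Complex.ofReal)).mulVec w ≠ 0) :
    IsUnit (P * L + 1) := by
  subst hAc
  have hRicC := congrArg ofRealHom.mapMatrix hRic
  have hLyapC := congrArg ofRealHom.mapMatrix hLyap
  simp only [map_add, map_sub, map_mul, map_zero, ofRealHom_mapMatrix_transpose] at hRicC hLyapC
  have hL : (ofRealHom.mapMatrix L).IsHermitian := by
    rw [IsHermitian, ← ofRealHom_mapMatrix_transpose, hLsymm.eq]
  have hV := isUnit_mul_add_one_of_detectable hR.ofRealHom_mapMatrix hQ.ofRealHom_mapMatrix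
    hPsd.ofRealHom_mapMatrix hL hRicC hLyapC hdet
  rw [← map_one ofRealHom.mapMatrix, ← map_mul, ← map_add, isUnit_iff_isUnit_det,
    ← RingHom.map_det, isUnit_iff_ne_zero, map_ne_zero] at hV
  rwa [isUnit_iff_isUnit_det, isUnit_iff_ne_zero]
end

section
/- Let A_c, R, L be real n×n matrices with L symmetric solving L A_cᵀ + A_c L = R, R ⪰ 0, and A_c Hurwitz (all eigenvalues with negative real part). If (A, R) is controllable, where A = A_c + RP for a symmetric P, then L is negative definite. -/
/-!
The Cayley transform `C = (1 - A_c)⁻¹ (1 + A_c)` turns the Lyapunov equation into the Stein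
equation `C L Cᵀ - L = 2 (1 - A_c)⁻¹ R (1 - A_c)⁻ᵀ ⪰ 0` and maps the Hurwitz matrix `A_c` to a
matrix with spectrum in the open unit disc, so `Cᵏ → 0` by Gelfand's formula. Hence
`xᵀ Cᵏ L Cᵏᵀ x` increases with `k` and tends to `0`, which gives `L ⪯ 0`. If `L` were singular,
its complex kernel would be `A_cᵀ`-invariant and killed by `R` (for `L u = 0`,
`u* R u = u* L A_cᵀ u = 0`), so it would contain an eigenvector `u` of `A_cᵀ` with `R u = 0`;
then `u` is also an eigenvector of `Aᵀ = A_cᵀ + P R`, contradicting controllability.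
-/

open Matrix Complex Filter Topology
open scoped ComplexOrder

theorem tendsto_pow_atTop_nhds_zero_of_forall_norm_lt_one {A : Type*} [NormedRing A]
    [NormedAlgebra ℂ A] [CompleteSpace A] {a : A} (ha : ∀ z ∈ spectrum ℂ a, ‖z‖ < 1) :
    Tendsto (fun k : ℕ => a ^ k) atTop (𝓝 0) := by
  cases subsingleton_or_nontrivial A
  · simp [Subsingleton.elim _ (0 : A)]
  have hρ : spectralRadius ℂ a < (1 : NNReal) :=
    spectrum.spectralRadius_lt_of_forall_lt a fun z hz => mod_cast ha z hz
  obtain ⟨r, hρr, hr1⟩ := ENNReal.lt_iff_exists_nnreal_btwn.mp hρ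
  have hbound : ∀ᶠ k : ℕ in atTop, ‖a ^ k‖ ≤ r ^ k := by
    filter_upwards [(spectrum.pow_nnnorm_pow_one_div_tendsto_nhds_spectralRadius a
      ).eventually_lt_const hρr, eventually_gt_atTop 0] with k hk hk0
    rw [one_div, ENNReal.rpow_inv_lt_iff (by positivity), ENNReal.rpow_natCast] at hk
    exact_mod_cast hk.le
  exact tendsto_zero_iff_norm_tendsto_zero.mpr <| squeeze_zero' (.of_forall fun _ => norm_nonneg _)
    hbound (tendsto_pow_atTop_nhds_zero_of_lt_one r.coe_nonneg (mod_cast hr1))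

theorem Module.End.exists_mem_ne_zero_apply_eq_smul_of_mapsTo {K V : Type*} [Field K]
    [IsAlgClosed K] [AddCommGroup V] [Module K V] [FiniteDimensional K V] (f : Module.End K V)
    {W : Submodule K V} (hW : W ≠ ⊥) (hfW : ∀ v ∈ W, f v ∈ W) :
    ∃ μ : K, ∃ v ∈ W, v ≠ 0 ∧ f v = μ • v := by
  have : Nontrivial W := Submodule.nontrivial_iff_ne_bot.mpr hW
  obtain ⟨μ, hμ⟩ := Module.End.exists_eigenvalue (f.restrict hfW)
  obtain ⟨w, hw⟩ := hμ.exists_hasEigenvector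
  exact ⟨μ, w, w.2, by simpa using hw.2, congrArg Subtype.val hw.apply_eq_smul⟩

theorem Complex.re_sub_one_div_add_one (μ : ℂ) :
    ((μ - 1) / (μ + 1)).re = (‖μ‖ ^ 2 - 1) / normSq (μ + 1) := by
  rw [div_re, ← add_div, Complex.sq_norm]
  congr 1
  simp [normSq_apply]
  ring

namespace Matrix

variable {n : Type*} [Fintype n] [DecidableEq n]

theorem map_nonsing_inv {K L : Type*} [Field K] [Field L] (f : K →+* L) (M : Matrix n n K) :
    M⁻¹.map f = (M.map f)⁻¹ := by
  have hdet : (M.map f).det = f M.det := (RingHom.map_det f M).symm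
  have hadj : (M.map f).adjugate = M.adjugate.map f := (RingHom.map_adjugate f M).symm
  ext i j
  simp [inv_def, hdet, hadj, Ring.inverse_eq_inv']

omit [DecidableEq n] in
theorem map_ofReal_mul (M N : Matrix n n ℝ) : (M * N).map ofReal = M.map ofReal * N.map ofReal :=
  Matrix.map_mul (f := ofRealHom)

omit [Fintype n] [DecidableEq n] in
theorem conjTranspose_map_ofReal (M : Matrix n n ℝ) : (M.map ofReal)ᴴ = Mᵀ.map ofReal := by
  rw [← conjTranspose_map _ (fun r => (conj_ofReal r).symm), conjTranspose_eq_transpose_of_trivial]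

theorem PosSemidef.map_ofReal {M : Matrix n n ℝ} (hM : M.PosSemidef) :
    (M.map ofReal).PosSemidef := by
  open scoped MatrixOrder in
  obtain ⟨B, rfl⟩ := CStarAlgebra.nonneg_iff_eq_star_mul_self.mp hM.nonneg
  rw [star_eq_conjTranspose, conjTranspose_eq_transpose_of_trivial, map_ofReal_mul,
    ← conjTranspose_map_ofReal]
  exact posSemidef_conjTranspose_mul_self _

theorem isUnit_map_ofReal_iff {M : Matrix n n ℝ} : IsUnit (M.map ofReal) ↔ IsUnit M := by
  have hdet : (M.map ofReal).det = (M.det : ℂ) := (ofRealHom.map_det M).symm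
  rw [isUnit_iff_isUnit_det, isUnit_iff_isUnit_det, hdet, isUnit_iff_ne_zero, isUnit_iff_ne_zero,
    ofReal_ne_zero]

noncomputable def cayley {K : Type*} [Field K] (M : Matrix n n K) : Matrix n n K :=
  (1 - M)⁻¹ * (1 + M)

theorem cayley_map {K L : Type*} [Field K] [Field L] (f : K →+* L) (M : Matrix n n K) :
    (cayley M).map f = cayley (M.map f) := by
  rw [cayley, cayley, Matrix.map_mul, map_nonsing_inv, Matrix.map_sub _ (map_sub f),
    Matrix.map_add _ (map_add f), Matrix.map_one _ (map_zero f) (map_one f)]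

theorem one_sub_mul_cayley {K : Type*} [Field K] {M : Matrix n n K} (hM : IsUnit (1 - M)) :
    (1 - M) * cayley M = 1 + M :=
  mul_nonsing_inv_cancel_left _ _ ((isUnit_iff_isUnit_det _).mp hM)

theorem cayley_mul_mul_transpose_sub {K : Type*} [Field K] {M : Matrix n n K} (hM : IsUnit (1 - M))
    (L : Matrix n n K) :
    cayley M * L * (cayley M)ᵀ - L = (1 - M)⁻¹ * (2 • (L * Mᵀ + M * L)) * (1 - M)⁻¹ᵀ := by
  have hB : IsUnit (1 - M).det := (isUnit_iff_isUnit_det _).mp hM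
  have hconj : ∀ X : Matrix n n K, X = (1 - M)⁻¹ * ((1 - M) * X * (1 - M)ᵀ) * (1 - M)⁻¹ᵀ := by
    intro X
    rw [transpose_nonsing_inv, ← Matrix.mul_assoc, nonsing_inv_mul_cancel_left _ _ hB,
      mul_nonsing_inv_cancel_right _ _ (by rwa [det_transpose])]
  rw [hconj (cayley M * L * (cayley M)ᵀ - L)]
  congr 2
  have h := one_sub_mul_cayley hM
  have hT : (cayley M)ᵀ * (1 - M)ᵀ = (1 + M)ᵀ := by rw [← transpose_mul, h]
  calc (1 - M) * (cayley M * L * (cayley M)ᵀ - L) * (1 - M)ᵀ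
      = ((1 - M) * cayley M) * L * ((cayley M)ᵀ * (1 - M)ᵀ) - (1 - M) * L * (1 - M)ᵀ := by
        noncomm_ring
    _ = 2 • (L * Mᵀ + M * L) := by
        rw [h, hT, transpose_add, transpose_sub, transpose_one]
        noncomm_ring

def IsHurwitz (M : Matrix n n ℂ) : Prop :=
  ∀ (μ : ℂ) (v : n → ℂ), v ≠ 0 → M *ᵥ v = μ • v → μ.re < 0

namespace IsHurwitz

variable {M : Matrix n n ℂ}

theorem isUnit_one_sub (hM : IsHurwitz M) : IsUnit (1 - M) := by
  rw [isUnit_iff_isUnit_det, isUnit_iff_ne_zero]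
  intro hdet
  obtain ⟨v, hv, hMv⟩ := exists_mulVec_eq_zero_iff.mpr hdet
  rw [sub_mulVec, one_mulVec, sub_eq_zero] at hMv
  exact absurd (hM 1 v hv (by rw [← hMv, one_smul])) (by norm_num)

theorem norm_lt_one_of_mem_spectrum_cayley (hM : IsHurwitz M) {μ : ℂ}
    (hμ : μ ∈ spectrum ℂ (cayley M)) : ‖μ‖ < 1 := by
  rw [← spectrum_toLin', ← Module.End.hasEigenvalue_iff_mem_spectrum] at hμ
  obtain ⟨v, hv⟩ := hμ.exists_hasEigenvector
  have hCv : cayley M *ᵥ v = μ • v := by simpa using hv.apply_eq_smul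
  have hv0 : v ≠ 0 := hv.2
  -- `(1 + M) v = μ (1 - M) v`, i.e. `(μ + 1) M v = (μ - 1) v`
  have hMv : (μ + 1) • (M *ᵥ v) = (μ - 1) • v := by
    have h := congrArg ((1 - M) *ᵥ ·) hCv
    simp only [mulVec_mulVec, one_sub_mul_cayley hM.isUnit_one_sub, mulVec_smul, add_mulVec,
      sub_mulVec, one_mulVec] at h
    linear_combination (norm := module) h
  have hμ1 : μ + 1 ≠ 0 := by
    intro h
    have h2 : (μ - 1) • v = 0 := by rw [← hMv, h, zero_smul]
    refine (smul_eq_zero.mp h2).elim (fun h' => ?_) hv0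
    exact (two_ne_zero : (2 : ℂ) ≠ 0) (by linear_combination h - h')
  have hre := hM ((μ - 1) / (μ + 1)) v hv0 (by
    rw [div_eq_inv_mul, mul_smul, ← hMv, smul_smul, inv_mul_cancel₀ hμ1, one_smul])
  rw [Complex.re_sub_one_div_add_one] at hre
  have hsq : ‖μ‖ ^ 2 < 1 := by
    by_contra! h
    exact (div_nonneg (sub_nonneg.mpr h) (normSq_nonneg _)).not_gt hre
  exact (pow_lt_one_iff_of_nonneg (norm_nonneg μ) two_ne_zero).mp hsq

end IsHurwitz

section LinftyOpNorm

-- Any Banach-algebra norm will do: its topology is the product topology on matrices.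
attribute [local instance] Matrix.linftyOpNormedAddCommGroup Matrix.linftyOpNormedRing
  Matrix.linftyOpNormedAlgebra

theorem IsHurwitz.tendsto_cayley_pow {M : Matrix n n ℂ} (hM : IsHurwitz M) :
    Tendsto (fun k : ℕ => cayley M ^ k) atTop (𝓝 0) :=
  tendsto_pow_atTop_nhds_zero_of_forall_norm_lt_one fun _ => hM.norm_lt_one_of_mem_spectrum_cayley

end LinftyOpNorm

theorem tendsto_cayley_pow_of_isHurwitz_map_ofReal {A : Matrix n n ℝ}
    (hA : IsHurwitz (A.map ofReal)) : Tendsto (fun k : ℕ => cayley A ^ k) atTop (𝓝 0) := by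
  have hre : Continuous fun M : Matrix n n ℂ => M.map re := continuous_id.matrix_map continuous_re
  have hlim := (hre.tendsto 0).comp hA.tendsto_cayley_pow
  have hk : ∀ k : ℕ, (cayley (A.map ofReal) ^ k).map re = cayley A ^ k := fun k => by
    have hmap : (cayley A).map ofReal = cayley (A.map ofReal) := cayley_map ofRealHom A
    have hpow : (cayley A ^ k).map ofReal = cayley (A.map ofReal) ^ k := by
      rw [← hmap]; exact map_pow ofRealHom.mapMatrix _ _
    rw [← hpow, Matrix.map_map]
    ext
    simp
  simpa [Function.comp_def, hk] using hlim

theorem posSemidef_neg_of_stein {L C : Matrix n n ℝ} (hL : L.IsSymm)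
    (hQ : (C * L * Cᵀ - L).PosSemidef) (hC : Tendsto (fun k : ℕ => C ^ k) atTop (𝓝 0)) :
    (-L).PosSemidef := by
  refine .of_dotProduct_mulVec_nonneg
    (by rw [IsHermitian, conjTranspose_eq_transpose_of_trivial, hL.neg.eq]) fun x => ?_
  set f : ℕ → ℝ := fun k => x ⬝ᵥ ((C ^ k * L * (C ^ k)ᵀ) *ᵥ x)
  -- `f` is increasing because `Cᵏ⁺¹ L Cᵏ⁺¹ᵀ = Cᵏ L Cᵏᵀ + Cᵏ (C L Cᵀ - L) Cᵏᵀ`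
  have hmono : Monotone f := monotone_nat_of_le_succ fun k => by
    have hstep : C ^ (k + 1) * L * (C ^ (k + 1))ᵀ
        = C ^ k * L * (C ^ k)ᵀ + C ^ k * (C * L * Cᵀ - L) * (C ^ k)ᵀ := by
      rw [pow_succ, transpose_mul]; noncomm_ring
    have hnn := (hQ.mul_mul_conjTranspose_same (C ^ k)).dotProduct_mulVec_nonneg x
    simp only [f, hstep, add_mulVec, dotProduct_add, star_trivial,
      conjTranspose_eq_transpose_of_trivial] at hnn ⊢
    linarith
  have hlim : Tendsto f atTop (𝓝 0) := by
    have hcont : Continuous fun M : Matrix n n ℝ => x ⬝ᵥ ((M * L * Mᵀ) *ᵥ x) := by fun_prop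
    have h0 : x ⬝ᵥ ((0 * L * 0ᵀ) *ᵥ x) = 0 := by simp
    exact h0 ▸ (hcont.tendsto 0).comp hC
  simpa [f, neg_mulVec] using hmono.ge_of_tendsto hlim 0

theorem posSemidef_neg_of_lyapunov {A R L : Matrix n n ℝ} (hR : R.PosSemidef) (hL : L.IsSymm)
    (hLyap : L * Aᵀ + A * L = R) (hA : IsHurwitz (A.map ofReal)) : (-L).PosSemidef := by
  have hB : IsUnit (1 - A) := by
    rw [← isUnit_map_ofReal_iff, Matrix.map_sub _ ofReal_sub,
      Matrix.map_one _ ofReal_zero ofReal_one]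
    exact hA.isUnit_one_sub
  refine posSemidef_neg_of_stein hL ?_ (tendsto_cayley_pow_of_isHurwitz_map_ofReal hA)
  rw [cayley_mul_mul_transpose_sub hB, hLyap, two_nsmul, ← conjTranspose_eq_transpose_of_trivial]
  exact (hR.add hR).mul_mul_conjTranspose_same _

omit [DecidableEq n] in
theorem mulVec_eq_zero_of_lyapunov {𝕜 : Type*} [RCLike 𝕜] {A R L : Matrix n n 𝕜}
    (hR : R.PosSemidef) (hL : L.IsHermitian) (hLyap : L * Aᴴ + A * L = R) {u : n → 𝕜}
    (hu : L *ᵥ u = 0) : R *ᵥ u = 0 ∧ L *ᵥ (Aᴴ *ᵥ u) = 0 := by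
  have hRu : L *ᵥ (Aᴴ *ᵥ u) = R *ᵥ u := by
    rw [← hLyap, add_mulVec, ← mulVec_mulVec, ← mulVec_mulVec, hu, mulVec_zero, add_zero]
  have hquad : star u ⬝ᵥ (R *ᵥ u) = 0 := by
    rw [← hRu, dotProduct_mulVec, ← hL.eq, vecMul_conjTranspose, star_star, hu, star_zero,
      zero_dotProduct]
  have hR0 := (hR.dotProduct_mulVec_zero_iff u).mp hquad
  exact ⟨hR0, hRu.trans hR0⟩

theorem exists_eigenvector_conjTranspose_of_lyapunov {A R L : Matrix n n ℂ} (hR : R.PosSemidef)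
    (hL : L.IsHermitian) (hLyap : L * Aᴴ + A * L = R) (hLu : ¬ IsUnit L) :
    ∃ μ : ℂ, ∃ u : n → ℂ, u ≠ 0 ∧ Aᴴ *ᵥ u = μ • u ∧ R *ᵥ u = 0 := by
  have hker : LinearMap.ker L.mulVecLin ≠ ⊥ := by
    rwa [ne_eq, LinearMap.ker_eq_bot, coe_mulVecLin, mulVec_injective_iff_isUnit]
  obtain ⟨μ, u, hu, hu0, hAu⟩ :=
    Module.End.exists_mem_ne_zero_apply_eq_smul_of_mapsTo Aᴴ.mulVecLin hker
    fun v hv => (mulVec_eq_zero_of_lyapunov hR hL hLyap hv).2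
  exact ⟨μ, u, hu0, hAu, (mulVec_eq_zero_of_lyapunov hR hL hLyap hu).1⟩

end Matrix

/-- If `(A, R)` is controllable (Hautus), `A_c = A - RP` is Hurwitz and `L` is the symmetric
solution of the Lyapunov equation `L A_cᵀ + A_c L = R` with `R ⪰ 0`, then `L` is negative
definite. -/
theorem stmt_4 {n : ℕ} (A R P L Ac : Matrix (Fin n) (Fin n) ℝ)
    (hR : R.PosSemidef) (hPsymm : P.IsSymm) (hLsymm : L.IsSymm)
    (hA : A = Ac + R * P)
    (hLyap : L * Acᵀ + Ac * L = R)
    (hHurwitz : ∀ (lam : ℂ) (v : Fin n → ℂ), v ≠ 0 →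
      (Ac.map (Complex.ofReal)).mulVec v = lam • v → lam.re < 0)
    (hctrb : ∀ (lam : ℂ) (u : Fin n → ℂ), u ≠ 0 →
      (Aᵀ.map (Complex.ofReal)).mulVec u = lam • u →
      (R.map (Complex.ofReal)).mulVec u ≠ 0) :
    (-L).PosDef := by
  have hneg : (-L).PosSemidef := posSemidef_neg_of_lyapunov hR hLsymm hLyap hHurwitz
  refine hneg.posDef_iff_isUnit.mpr (IsUnit.neg ?_)
  by_contra hL
  have hLc : (L.map ofReal).IsHermitian := by
    rw [IsHermitian, conjTranspose_map_ofReal, hLsymm.eq]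
  have hLyapC : L.map ofReal * (Ac.map ofReal)ᴴ + Ac.map ofReal * L.map ofReal = R.map ofReal := by
    rw [conjTranspose_map_ofReal, ← map_ofReal_mul, ← map_ofReal_mul,
      ← Matrix.map_add _ ofReal_add, hLyap]
  obtain ⟨μ, u, hu0, hAu, hRu⟩ := exists_eigenvector_conjTranspose_of_lyapunov hR.map_ofReal hLc
    hLyapC (mt isUnit_map_ofReal_iff.mp hL)
  have hAT : Aᵀ.map ofReal = (Ac.map ofReal)ᴴ + P.map ofReal * R.map ofReal := by
    rw [conjTranspose_map_ofReal, ← map_ofReal_mul, ← Matrix.map_add _ ofReal_add, hA,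
      transpose_add, transpose_mul, hPsymm.eq, (isHermitian_iff_isSymm.mp hR.isHermitian).eq]
  refine hctrb μ u hu0 ?_ hRu
  rw [hAT, add_mulVec, hAu, ← mulVec_mulVec, hRu, mulVec_zero, add_zero]
end

section
/- Let Ham = [[A, −R],[−Q, −Aᵀ]] with R, Q ⪰ 0, (A,R) stabilizable and (Q,A) detectable, and let P ⪰ 0 solve the Riccati equation with A_c = A − RP Hurwitz and L solve the Lyapunov equation L A_cᵀ + A_c L = R. Write exp(t·Ham) in n×n blocks Φ_ij(t). Then Φ_11(t) = exp(tA_c)(I + L̃(t)P) where L̃(t) = L − exp(−tA_c)L exp(−tA_cᵀ), and Φ_11(t) is nonsingular for all t ≥ 0. -/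
/-!
Put `M = [[1, L], [P, P L + 1]]`. The Riccati equation (for the lower left block) and the Lyapunov
equation (for the right column) say exactly that `Ham M = M diag(A_c, -A_cᵀ)`, hence
`exp(t Ham) = M diag(exp(t A_c), exp(-t A_cᵀ)) M⁻¹`, whose `(1,1)` block is `exp(t A_c)(1 + L̃(t) P)`.
Since `d/ds (e^{s A_c} L e^{s A_cᵀ}) = e^{s A_c} R e^{s A_cᵀ} ⪰ 0`, the quadratic form of `L̃(t)` is
nonnegative for `t ≥ 0`. Finally `1 + S P` is invertible whenever `xᵀ S x ≥ 0` and `P ⪰ 0`: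
pairing `v + S P v = 0` with `P v` gives `vᵀ P v + (P v)ᵀ S (P v) = 0`, so `P v = 0` and `v = 0`.
-/

open Matrix NormedSpace

namespace Matrix

open scoped Norms.Operator in
theorem exp_fromBlocks_zero {m n 𝕜 : Type*} [Fintype m] [DecidableEq m] [Fintype n]
    [DecidableEq n] [RCLike 𝕜] (A : Matrix m m 𝕜) (D : Matrix n n 𝕜) :
    exp (fromBlocks A 0 0 D) = fromBlocks (exp A) 0 0 (exp D) := by
  let f : Matrix m m 𝕜 × Matrix n n 𝕜 →+* Matrix (m ⊕ n) (m ⊕ n) 𝕜 :=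
    { toFun p := fromBlocks p.1 0 0 p.2
      map_one' := fromBlocks_one
      map_mul' p q := by simp [fromBlocks_multiply]
      map_zero' := fromBlocks_zero
      map_add' p q := by simp [fromBlocks_add] }
  have hf : Continuous f :=
    continuous_fst.matrix_fromBlocks continuous_const continuous_const continuous_snd
  -- the goals left by `convert` differ only in the instances carried by the Pi topology and by
  -- the operator norm on matrices, which agree definitionally
  convert (map_exp f hf (A, D)).symm using 1
  · rfl
  · simp only [f, RingHom.coe_mk, MonoidHom.coe_mk, OneHom.coe_mk]
    rw [Prod.fst_exp, Prod.snd_exp]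
    rfl
  · exact FiniteDimensional.complete 𝕜 _

theorem isUnit_one_add_mul_of_posSemidef {m : Type*} [Fintype m] [DecidableEq m]
    {S P : Matrix m m ℝ} (hS : ∀ x, 0 ≤ x ⬝ᵥ S *ᵥ x) (hP : P.PosSemidef) :
    IsUnit (1 + S * P) := by
  rw [isUnit_iff_isUnit_det, isUnit_iff_ne_zero]
  intro hdet
  obtain ⟨v, hv0, hv⟩ := exists_mulVec_eq_zero_iff.mpr hdet
  rw [add_mulVec, one_mulVec, ← mulVec_mulVec] at hv
  have hsum : v ⬝ᵥ P *ᵥ v + P *ᵥ v ⬝ᵥ S *ᵥ (P *ᵥ v) = 0 := by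
    simpa [dotProduct_add, dotProduct_comm (P *ᵥ v) v] using congrArg (P *ᵥ v ⬝ᵥ ·) hv
  have hPv : v ⬝ᵥ P *ᵥ v = 0 := by
    linarith [hS (P *ᵥ v), show 0 ≤ v ⬝ᵥ P *ᵥ v by simpa using hP.dotProduct_mulVec_nonneg v]
  have hPv0 : P *ᵥ v = 0 := (hP.dotProduct_mulVec_zero_iff v).mp (by simpa using hPv)
  exact hv0 (by simpa [hPv0] using hv)

end Matrix

section Lyapunov

variable {m : Type*} [Fintype m] [DecidableEq m]

open scoped Norms.Operator in
theorem hasDerivAt_exp_smul_mul_mul_exp_smul_transpose (B L : Matrix m m ℝ) (s : ℝ) :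
    HasDerivAt (fun s : ℝ => exp (s • B) * L * exp (s • Bᵀ))
      (exp (s • B) * (B * L + L * Bᵀ) * exp (s • Bᵀ)) s := by
  have : CompleteSpace (Matrix m m ℝ) := FiniteDimensional.complete ℝ _
  exact (((hasDerivAt_exp_smul_const B s).mul_const L).mul
    (hasDerivAt_exp_smul_const' Bᵀ s)).congr_deriv (by noncomm_ring)

theorem monotone_dotProduct_exp_smul_mul_mul_exp_smul_transpose {B L R : Matrix m m ℝ}
    (hLyap : L * Bᵀ + B * L = R) (hR : R.PosSemidef) (x : m → ℝ) :
    Monotone fun s : ℝ => x ⬝ᵥ (exp (s • B) * L * exp (s • Bᵀ)) *ᵥ x := by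
  open scoped Norms.Operator in
  let q : Matrix m m ℝ →L[ℝ] ℝ := LinearMap.toContinuousLinearMap
    { toFun M := x ⬝ᵥ M *ᵥ x
      map_add' M N := by simp [add_mulVec, dotProduct_add]
      map_smul' c M := by simp [smul_mulVec, dotProduct_smul] }
  have hderiv (s : ℝ) : HasDerivAt (fun s : ℝ => x ⬝ᵥ (exp (s • B) * L * exp (s • Bᵀ)) *ᵥ x)
      (x ⬝ᵥ (exp (s • B) * R * (exp (s • B))ᴴ) *ᵥ x) s := by
    have := q.hasFDerivAt.comp_hasDerivAt s
      (hasDerivAt_exp_smul_mul_mul_exp_smul_transpose B L s)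
    rwa [add_comm, hLyap, ← transpose_smul, exp_transpose,
      ← conjTranspose_eq_transpose_of_trivial] at this
  refine monotone_of_deriv_nonneg (fun s => (hderiv s).differentiableAt) fun s => ?_
  rw [(hderiv s).deriv]
  simpa using (hR.mul_mul_conjTranspose_same (exp (s • B))).dotProduct_mulVec_nonneg x

theorem dotProduct_sub_exp_smul_mul_mul_exp_smul_transpose_nonneg {B L R : Matrix m m ℝ}
    (hLyap : L * Bᵀ + B * L = R) (hR : R.PosSemidef) {t : ℝ} (ht : 0 ≤ t) (x : m → ℝ) :
    0 ≤ x ⬝ᵥ (L - exp ((-t) • B) * L * exp ((-t) • Bᵀ)) *ᵥ x := by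
  have := monotone_dotProduct_exp_smul_mul_mul_exp_smul_transpose hLyap hR x
    (neg_nonpos.mpr ht)
  simpa [sub_mulVec, dotProduct_sub] using this

end Lyapunov

section Hamiltonian

variable {n α : Type*} [Fintype n] [DecidableEq n] [CommRing α]

/-- `[[1, L], [P, P * L + 1]] = [[1, 0], [P, 1]] * [[1, L], [0, 1]]`, whence the inverse. -/
def riccatiBlockUnit (L P : Matrix n n α) : (Matrix (n ⊕ n) (n ⊕ n) α)ˣ where
  val := fromBlocks 1 L P (P * L + 1)
  inv := fromBlocks (1 + L * P) (-L) (-P) 1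
  val_inv := by rw [fromBlocks_multiply, ← fromBlocks_one]; congr 1 <;> noncomm_ring
  inv_val := by rw [fromBlocks_multiply, ← fromBlocks_one]; congr 1 <;> noncomm_ring

theorem hamiltonian_mul_riccatiBlockUnit {A R Q P L Ac : Matrix n n α} (hR : R.IsSymm)
    (hP : P.IsSymm) (hRic : P * A + Aᵀ * P - P * R * P + Q = 0) (hAc : Ac = A - R * P)
    (hLyap : L * Acᵀ + Ac * L = R) :
    fromBlocks A (-R) (-Q) (-Aᵀ) * riccatiBlockUnit L P =
      riccatiBlockUnit L P * fromBlocks Ac 0 0 (-Acᵀ) := by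
  obtain rfl : Q = -(P * A + Aᵀ * P - P * R * P) := eq_neg_of_add_eq_zero_right hRic
  have hAcT : Acᵀ = Aᵀ - P * R := by rw [hAc, transpose_sub, transpose_mul, hR.eq, hP.eq]
  have hLyap0 : L * Acᵀ + Ac * L - R = 0 := sub_eq_zero.mpr hLyap
  simp only [riccatiBlockUnit, fromBlocks_multiply]
  congr 1 <;> rw [← sub_eq_zero]
  · rw [hAc]; noncomm_ring
  · calc _ = L * Acᵀ + Ac * L - R := by rw [hAcT, hAc]; noncomm_ring
      _ = 0 := hLyap0
  · rw [hAc]; noncomm_ring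
  · calc _ = P * (L * Acᵀ + Ac * L - R) := by rw [hAcT, hAc]; noncomm_ring
      _ = 0 := by rw [hLyap0, mul_zero]

theorem toBlocks₁₁_exp_smul_hamiltonian {A R Q P L Ac : Matrix n n ℝ} (hR : R.IsSymm)
    (hP : P.IsSymm) (hRic : P * A + Aᵀ * P - P * R * P + Q = 0) (hAc : Ac = A - R * P)
    (hLyap : L * Acᵀ + Ac * L = R) (t : ℝ) :
    (exp (t • fromBlocks A (-R) (-Q) (-Aᵀ))).toBlocks₁₁ =
      exp (t • Ac) * (1 + (L - exp ((-t) • Ac) * L * exp ((-t) • Acᵀ)) * P) := by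
  set U := riccatiBlockUnit L P
  have hconj : t • fromBlocks A (-R) (-Q) (-Aᵀ) =
      U * fromBlocks (t • Ac) 0 0 ((-t) • Acᵀ) * (U⁻¹ : (Matrix (n ⊕ n) (n ⊕ n) ℝ)ˣ) := by
    rw [Units.eq_mul_inv_iff_mul_eq, smul_mul_assoc,
      hamiltonian_mul_riccatiBlockUnit hR hP hRic hAc hLyap, ← mul_smul_comm, fromBlocks_smul]
    simp [U]
  have hinv : exp (t • Ac) * exp ((-t) • Ac) = 1 := by
    rw [← Matrix.exp_add_of_commute _ _ (((Commute.refl Ac).smul_left t).smul_right (-t)),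
      ← add_smul, add_neg_cancel, zero_smul, exp_zero]
  rw [hconj, Matrix.exp_units_conj, exp_fromBlocks_zero]
  simp only [U, riccatiBlockUnit, Units.inv_mk, fromBlocks_multiply, toBlocks_fromBlocks₁₁]
  calc _ = exp (t • Ac) + exp (t • Ac) * (L * P) - 1 * (L * exp ((-t) • Acᵀ) * P) := by
        noncomm_ring
    _ = exp (t • Ac) + exp (t • Ac) * (L * P) -
          exp (t • Ac) * exp ((-t) • Ac) * (L * exp ((-t) • Acᵀ) * P) := by rw [hinv]
    _ = _ := by noncomm_ring

end Hamiltonian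

theorem stmt_7_general {n : ℕ} (A R Q P L Ac : Matrix (Fin n) (Fin n) ℝ)
    (hR : R.PosSemidef) (hPsd : P.PosSemidef)
    (hRic : P * A + Aᵀ * P - P * R * P + Q = 0)
    (hAc : Ac = A - R * P)
    (hLyap : L * Acᵀ + Ac * L = R) :
    ∀ t : ℝ, 0 ≤ t →
      (NormedSpace.exp (t • Matrix.fromBlocks A (-R) (-Q) (-Aᵀ))).toBlocks₁₁ =
        NormedSpace.exp (t • Ac) *
          (1 + (L - NormedSpace.exp ((-t) • Ac) * L * NormedSpace.exp ((-t) • Acᵀ)) * P) ∧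
      IsUnit ((NormedSpace.exp (t • Matrix.fromBlocks A (-R) (-Q) (-Aᵀ))).toBlocks₁₁) := by
  intro t ht
  rw [toBlocks₁₁_exp_smul_hamiltonian (isHermitian_iff_isSymm.mp hR.isHermitian)
    (isHermitian_iff_isSymm.mp hPsd.isHermitian) hRic hAc hLyap t]
  exact ⟨rfl, (Matrix.isUnit_exp _).mul <| isUnit_one_add_mul_of_posSemidef
    (dotProduct_sub_exp_smul_mul_mul_exp_smul_transpose_nonneg hLyap hR ht) hPsd⟩

/-- The (1,1) block of `exp(t·Ham)` equals `exp(t A_c)(I + L̃(t) P)` and is nonsingular for all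
`t ≥ 0`, under stabilizability of `(A,R)`, detectability of `(Q,A)`, the Riccati and Lyapunov
equations, and `A_c = A - RP` Hurwitz. -/
theorem stmt_7 {n : ℕ} (A R Q P L Ac : Matrix (Fin n) (Fin n) ℝ)
    (hR : R.PosSemidef) (hQ : Q.PosSemidef) (hPsd : P.PosSemidef) (hLsymm : L.IsSymm)
    (hRic : P * A + Aᵀ * P - P * R * P + Q = 0)
    (hAc : Ac = A - R * P)
    (hHurwitz : ∀ (lam : ℂ) (v : Fin n → ℂ), v ≠ 0 →
      (Ac.map (Complex.ofReal)).mulVec v = lam • v → lam.re < 0)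
    (hLyap : L * Acᵀ + Ac * L = R)
    (hstab : ∀ (lam : ℂ) (w : Fin n → ℂ), w ≠ 0 → 0 ≤ lam.re →
      (Aᵀ.map (Complex.ofReal)).mulVec w = lam • w →
      (R.map (Complex.ofReal)).mulVec w ≠ 0)
    (hdet : ∀ (lam : ℂ) (w : Fin n → ℂ), w ≠ 0 → 0 ≤ lam.re →
      (A.map (Complex.ofReal)).mulVec w = lam • w →
      (Q.map (Complex.ofReal)).mulVec w ≠ 0) :
    ∀ t : ℝ, 0 ≤ t →
      (NormedSpace.exp (t • Matrix.fromBlocks A (-R) (-Q) (-Aᵀ))).toBlocks₁₁ =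
        NormedSpace.exp (t • Ac) *
          (1 + (L - NormedSpace.exp ((-t) • Ac) * L * NormedSpace.exp ((-t) • Acᵀ)) * P) ∧
      IsUnit ((NormedSpace.exp (t • Matrix.fromBlocks A (-R) (-Q) (-Aᵀ))).toBlocks₁₁) :=
  stmt_7_general A R Q P L Ac hR hPsd hRic hAc hLyap
end

section
/- Let A ∈ ℝ^{n×n}, B ∈ ℝ^{n×m}, C ∈ ℝ^{r×n} with (A,B) stabilizable and (C,A) detectable, and let Ham = [[A, −BBᵀ],[−CᵀC, −Aᵀ]]. Then Ham is invertible, and for every z ∈ ℝʳ the linear steady-state equation Ham·[x̄; p̄] = [0; −Cᵀz] has a unique solution (x̄, p̄) ∈ ℝⁿ × ℝⁿ. -/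
/-!
A kernel vector `(x, p)` of `Ham` satisfies `A x = B Bᵀ p` and `Aᵀ p = -CᵀC x`; pairing the first
equation with `p` and the second with `x` gives `|Bᵀ p|² + |C x|² = pᵀA x - xᵀAᵀ p = 0`. Hence
`A x = 0 = C x` and `Aᵀ p = 0 = Bᵀ p`, so the Hautus tests at the eigenvalue `0` force `x = p = 0`.
An injective square matrix is invertible, so the steady-state equation is uniquely solvable.
-/

open Matrix Complex

variable {ι κ τ : Type*} [Fintype ι]

lemma eq_zero_of_mulVec_eq_zero_of_hautus (A : Matrix ι ι ℝ) (C : Matrix τ ι ℝ)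
    (hdet : ∀ (lam : ℂ) (v : ι → ℂ), v ≠ 0 → 0 ≤ lam.re →
      (A.map ofReal) *ᵥ v = lam • v → (C.map ofReal) *ᵥ v ≠ 0)
    {x : ι → ℝ} (hA : A *ᵥ x = 0) (hC : C *ᵥ x = 0) : x = 0 := by
  by_contra hx
  refine hdet 0 (ofReal ∘ x) ?_ le_rfl ?_ ?_
  · exact fun h => hx <| funext fun i => by simpa using congrFun h i
  · ext i; exact (RingHom.map_mulVec ofRealHom A x i).symm.trans (by simp [hA])
  · ext i; exact (RingHom.map_mulVec ofRealHom C x i).symm.trans (by simp [hC])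

lemma mulVec_eq_zero_of_hamiltonian_kernel [Fintype κ] [Fintype τ] (A : Matrix ι ι ℝ)
    (B : Matrix ι κ ℝ) (C : Matrix τ ι ℝ) {x p : ι → ℝ} (hx : A *ᵥ x = (B * Bᵀ) *ᵥ p)
    (hp : Aᵀ *ᵥ p = -((Cᵀ * C) *ᵥ x)) : Bᵀ *ᵥ p = 0 ∧ C *ᵥ x = 0 := by
  have energy : (Bᵀ *ᵥ p) ⬝ᵥ (Bᵀ *ᵥ p) + (C *ᵥ x) ⬝ᵥ (C *ᵥ x) = 0 := by
    have hpAx : p ⬝ᵥ A *ᵥ x = x ⬝ᵥ Aᵀ *ᵥ p := by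
      rw [dotProduct_mulVec, mulVec_transpose, dotProduct_comm]
    have hBp : p ⬝ᵥ (B * Bᵀ) *ᵥ p = (Bᵀ *ᵥ p) ⬝ᵥ (Bᵀ *ᵥ p) := by
      rw [← mulVec_mulVec, dotProduct_mulVec, mulVec_transpose]
    have hCx : x ⬝ᵥ (Cᵀ * C) *ᵥ x = (C *ᵥ x) ⬝ᵥ (C *ᵥ x) := by
      rw [← mulVec_mulVec, dotProduct_mulVec, vecMul_transpose]
    rw [hx, hp, dotProduct_neg, hBp, hCx] at hpAx
    linarith
  rw [add_eq_zero_iff_of_nonneg (by simpa using dotProduct_star_self_nonneg (Bᵀ *ᵥ p))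
    (by simpa using dotProduct_star_self_nonneg (C *ᵥ x))] at energy
  exact ⟨dotProduct_self_eq_zero.mp energy.1, dotProduct_self_eq_zero.mp energy.2⟩

lemma hamiltonian_mulVec_eq_zero [Fintype κ] [Fintype τ] (A : Matrix ι ι ℝ) (B : Matrix ι κ ℝ)
    (C : Matrix τ ι ℝ)
    (hstab : ∀ (lam : ℂ) (w : ι → ℂ), w ≠ 0 → 0 ≤ lam.re →
      (Aᵀ.map ofReal) *ᵥ w = lam • w → (Bᵀ.map ofReal) *ᵥ w ≠ 0)
    (hdet : ∀ (lam : ℂ) (v : ι → ℂ), v ≠ 0 → 0 ≤ lam.re →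
      (A.map ofReal) *ᵥ v = lam • v → (C.map ofReal) *ᵥ v ≠ 0)
    {v : ι ⊕ ι → ℝ} (hv : fromBlocks A (-(B * Bᵀ)) (-(Cᵀ * C)) (-Aᵀ) *ᵥ v = 0) : v = 0 := by
  set x := v ∘ Sum.inl
  set p := v ∘ Sum.inr
  obtain ⟨hx, hp⟩ : A *ᵥ x = (B * Bᵀ) *ᵥ p ∧ Aᵀ *ᵥ p = -((Cᵀ * C) *ᵥ x) := by
    rwa [fromBlocks_mulVec, ← Sum.elim_zero_zero, Sum.elim_eq_iff, neg_mulVec, neg_mulVec,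
      neg_mulVec, ← sub_eq_add_neg, sub_eq_zero, ← neg_add, neg_eq_zero,
      add_eq_zero_iff_eq_neg'] at hv
  obtain ⟨hBp, hCx⟩ := mulVec_eq_zero_of_hamiltonian_kernel A B C hx hp
  have hx0 : x = 0 := eq_zero_of_mulVec_eq_zero_of_hautus A C hdet
    (by rw [hx, ← mulVec_mulVec, hBp, mulVec_zero]) hCx
  have hp0 : p = 0 := eq_zero_of_mulVec_eq_zero_of_hautus Aᵀ Bᵀ hstab
    (by rw [hp, ← mulVec_mulVec, hCx, mulVec_zero, neg_zero]) hBp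
  rw [← Sum.elim_comp_inl_inr v, ← Sum.elim_zero_zero]
  exact congrArg₂ Sum.elim hx0 hp0

lemma existsUnique_mulVec_sumElim_eq {K : Type*} [Field K] [Fintype κ] [DecidableEq ι]
    [DecidableEq κ] {M : Matrix (ι ⊕ κ) (ι ⊕ κ) K} (hM : IsUnit M) (b : ι ⊕ κ → K) :
    ∃! xp : (ι → K) × (κ → K), M *ᵥ Sum.elim xp.1 xp.2 = b :=
  have hbij : Function.Bijective M.mulVec :=
    ⟨mulVec_injective_iff_isUnit.mpr hM, mulVec_surjective_iff_isUnit.mpr hM⟩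
  (hbij.comp (Equiv.sumArrowEquivProdArrow ι κ K).symm.bijective).existsUnique b

/-- Under stabilizability of `(A,B)` and detectability of `(C,A)`, the Hamiltonian matrix
`Ham = [[A, -BBᵀ],[-CᵀC, -Aᵀ]]` is invertible, and for every target `z` the steady-state
equation `Ham·[x̄; p̄] = [0; -Cᵀz]` has a unique solution `(x̄, p̄)`. -/
theorem stmt_19 {n m r : ℕ} (A : Matrix (Fin n) (Fin n) ℝ)
    (B : Matrix (Fin n) (Fin m) ℝ) (C : Matrix (Fin r) (Fin n) ℝ)
    (hstab : ∀ (lam : ℂ) (w : Fin n → ℂ), w ≠ 0 → 0 ≤ lam.re →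
      (Aᵀ.map (Complex.ofReal)).mulVec w = lam • w →
      (Bᵀ.map (Complex.ofReal)).mulVec w ≠ 0)
    (hdet : ∀ (lam : ℂ) (v : Fin n → ℂ), v ≠ 0 → 0 ≤ lam.re →
      (A.map (Complex.ofReal)).mulVec v = lam • v →
      (C.map (Complex.ofReal)).mulVec v ≠ 0) :
    IsUnit (Matrix.fromBlocks A (-(B * Bᵀ)) (-(Cᵀ * C)) (-Aᵀ)) ∧
    ∀ z : Fin r → ℝ, ∃! xp : (Fin n → ℝ) × (Fin n → ℝ),
      (Matrix.fromBlocks A (-(B * Bᵀ)) (-(Cᵀ * C)) (-Aᵀ)).mulVec (Sum.elim xp.1 xp.2) =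
        Sum.elim (0 : Fin n → ℝ) (-(Cᵀ.mulVec z)) := by
  have hunit : IsUnit (fromBlocks A (-(B * Bᵀ)) (-(Cᵀ * C)) (-Aᵀ)) :=
    mulVec_injective_iff_isUnit.mp <| (injective_iff_map_eq_zero (mulVecLin _)).mpr
      fun _ => hamiltonian_mulVec_eq_zero A B C hstab hdet
  exact ⟨hunit, fun z => existsUnique_mulVec_sumElim_eq hunit _⟩
end
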